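/- Let K be a field of characteristic zero and n ≥ 4. If V is a K-linear subspace of the space of derivations of T(n) such that no nonzero element of V is nilpotent as a K-linear endomorphism of T(n) (i.e., the elements of V are linearly nilindependent), then dim_K V ≤ n − 1. -/

import Mathlib

open Matrix

attribute [local instance 100] LieRing.ofAssociativeRing

/-- The Lie algebra `T(n)` of strictly upper triangular `n × n` matrices over `K`. -/
def strictUpper (n : ℕ) (K : Type*) [Field K] :
    LieSubalgebra K (Matrix (Fin n) (Fin n) K) where
  carrier := {M | ∀ i j : Fin n, j ≤ i → M i j = 0}
  add_mem' := by
    intro a b ha hb i j hij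
    simp [Matrix.add_apply, ha i j hij, hb i j hij]
  zero_mem' := by intro i j hij; simp
  smul_mem' := by
    intro c a ha i j hij
    simp [Matrix.smul_apply, ha i j hij]
  lie_mem' := by
    intro a b ha hb i j hij
    have hmul : ∀ x y : Matrix (Fin n) (Fin n) K,
        (∀ i j : Fin n, j ≤ i → x i j = 0) → (∀ i j : Fin n, j ≤ i → y i j = 0) →
        (x * y) i j = 0 := by
      intro x y hx hy
      rw [Matrix.mul_apply]
      apply Finset.sum_eq_zero
      intro s _
      rcases le_or_gt s i with h | h
      · rw [hx i s h, zero_mul]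
      · rw [hy s j (hij.trans h.le), mul_zero]
    rw [Ring.lie_def, Matrix.sub_apply, hmul a b ha hb, hmul b a hb ha, sub_zero]

/-- The standard basis element `N_{ik}` (with `i < k`) of `T(n)`. -/
def stdN {n : ℕ} {K : Type*} [Field K] {i k : Fin n} (h : i < k) :
    strictUpper n K :=
  ⟨Matrix.single i k 1, by
    intro a b hba
    simp only [Matrix.single, Matrix.of_apply, ite_eq_right_iff, one_ne_zero]
    rintro ⟨rfl, rfl⟩
    exact absurd h (not_lt.mpr hba)⟩

/-!
Reading off the `(i, i+1)` entry of `D E_{i,i+1}` is a linear map from derivations to `K^{n-1}`,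
so it suffices that every derivation in its kernel is nilpotent. Bracketing `D E_{i,i+1}` with basis
vectors commuting with `E_{i,i+1}` shows (using `n ≥ 4`, and `2 ≠ 0` when `|i - p| ≥ 2`) that its
other superdiagonal entries `(p, p+1)` vanish as well. Hence such a `D` sends each `E_{i,i+1}` to
matrices supported at distance `≥ 2` from the diagonal; by the Leibniz rule it then raises the
distance from the diagonal of every element by one, so `D ^ n = 0`.
-/

namespace strictUpper

variable {n : ℕ} {K : Type*} [Field K]

@[simp]
lemma coe_stdN {i k : Fin n} (h : i < k) :
    ((stdN h : strictUpper n K) : Matrix (Fin n) (Fin n) K) = single i k 1 := rfl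

lemma lie_stdN_apply (x : strictUpper n K) {c d : Fin n} (h : c < d) (p q : Fin n) :
    (⁅x, stdN h⁆ : strictUpper n K).val p q
      = (if q = d then x.val p c else 0) - (if p = c then x.val d q else 0) := by
  simp [Ring.lie_def, Matrix.mul_apply, Matrix.single_apply, ite_and, eq_comm]

lemma stdN_lie_apply (x : strictUpper n K) {a b : Fin n} (h : a < b) (p q : Fin n) :
    (⁅stdN (K := K) h, x⁆ : strictUpper n K).val p q
      = (if p = a then x.val b q else 0) - (if q = b then x.val p a else 0) := by
  simp [Ring.lie_def, Matrix.mul_apply, Matrix.single_apply, ite_and, eq_comm]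

lemma stdN_lie_stdN {a b c : Fin n} (hab : a < b) (hbc : b < c) :
    ⁅stdN (K := K) hab, stdN hbc⁆ = stdN (K := K) (hab.trans hbc) := by
  ext : 1
  simp [Ring.lie_def, (hab.trans hbc).ne']

lemma stdN_lie_stdN_eq_zero {a b c d : Fin n} (hab : a < b) (hcd : c < d) (hbc : b ≠ c)
    (hda : d ≠ a) : ⁅stdN (K := K) hab, stdN (K := K) hcd⁆ = 0 := by
  ext : 1
  simp [Ring.lie_def, hbc, hda]

lemma eq_sum_stdN (x : strictUpper n K) :
    x = ∑ a, ∑ b, if h : a < b then x.val a b • stdN h else 0 := by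
  ext : 1
  simp only [AddSubmonoidClass.coe_finsetSum]
  conv_lhs => rw [matrix_eq_sum_single x.val]
  refine Finset.sum_congr rfl fun a _ => Finset.sum_congr rfl fun b _ => ?_
  split_ifs with h
  · simp
  · simp [x.prop a b (not_lt.mp h)]

def filtration (d : ℕ) : Submodule K (strictUpper n K) where
  carrier := {x | ∀ p q : Fin n, (q : ℕ) < p + d → x.val p q = 0}
  add_mem' hx hy p q h := by simp [hx p q h, hy p q h]
  zero_mem' _ _ _ := rfl
  smul_mem' c x hx p q h := by simp [hx p q h]

lemma mem_filtration_one (x : strictUpper n K) : x ∈ filtration 1 :=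
  fun p q h => x.prop p q (by omega)

lemma filtration_antitone : Antitone (filtration (n := n) (K := K)) :=
  fun _ _ hde _ hx p q h => hx p q (by omega)

lemma eq_zero_of_mem_filtration {x : strictUpper n K} (hx : x ∈ filtration n) : x = 0 := by
  ext p q
  exact hx p q (by omega)

lemma stdN_mem_filtration {i k : Fin n} (h : i < k) {d : ℕ} (hd : (i : ℕ) + d ≤ k) :
    stdN (K := K) h ∈ filtration d := by
  intro p q hqp
  simp only [coe_stdN, single_apply, ite_eq_right_iff, and_imp]
  rintro rfl rfl
  omega

lemma lie_mem_filtration {x y : strictUpper n K} {a b : ℕ} (hx : x ∈ filtration a)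
    (hy : y ∈ filtration b) : ⁅x, y⁆ ∈ filtration (a + b) := by
  have hmul : ∀ {u v : strictUpper n K} {c e : ℕ}, u ∈ filtration c → v ∈ filtration e →
      ∀ p q : Fin n, (q : ℕ) < p + (c + e) → (u.val * v.val) p q = 0 := by
    intro u v c e hu hv p q hqp
    rw [Matrix.mul_apply]
    refine Finset.sum_eq_zero fun k _ => ?_
    rcases lt_or_ge (k : ℕ) (p + c) with hk | hk
    · rw [hu p k hk, zero_mul]
    · rw [hv k q (by omega), mul_zero]
  intro p q hqp
  simp [Ring.lie_def, hmul hx hy p q hqp, hmul hy hx p q (by omega)]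

lemma map_mem_filtration_succ (f : strictUpper n K →ₗ[K] strictUpper n K)
    (hf : ∀ (a b : Fin n) (h : a < b), f (stdN h) ∈ filtration ((b : ℕ) - a + 1)) {d : ℕ}
    {x : strictUpper n K} (hx : x ∈ filtration d) : f x ∈ filtration (d + 1) := by
  rw [eq_sum_stdN x, map_sum]
  refine Submodule.sum_mem _ fun a _ => ?_
  rw [map_sum]
  refine Submodule.sum_mem _ fun b _ => ?_
  split_ifs with hab
  · by_cases hxab : x.val a b = 0
    · simp [hxab]
    · rw [map_smul]
      refine Submodule.smul_mem _ _ (filtration_antitone ?_ (hf a b hab))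
      have := mt (hx a b) hxab
      omega
  · simp

lemma isNilpotent_of_map_mem_filtration_succ (f : Module.End K (strictUpper n K))
    (hf : ∀ d x, x ∈ filtration d → f x ∈ filtration (d + 1)) : IsNilpotent f := by
  have hpow : ∀ k x, (f ^ k) x ∈ filtration (k + 1) := by
    intro k
    induction k with
    | zero => exact mem_filtration_one
    | succ k ih => exact fun x => by rw [pow_succ', Module.End.mul_apply]; exact hf _ _ (ih x)
  exact ⟨n, LinearMap.ext fun x =>
    eq_zero_of_mem_filtration (filtration_antitone (by omega) (hpow n x))⟩

variable (D : LieDerivation K (strictUpper n K) (strictUpper n K))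

lemma derivation_stdN_apply_eq_zero_of_right {a b c d p : Fin n} (hab : a < b) (hcd : c < d)
    (hbc : b ≠ c) (hda : d ≠ a) (hdb : d ≠ b) (hpa : p ≠ a) :
    (D (stdN hab)).val p c = 0 := by
  have hcomm : ⁅(stdN hab : strictUpper n K), D (stdN hcd)⁆ + ⁅D (stdN hab), stdN hcd⁆ =
      0 := by
    rw [← D.apply_lie_eq_add, stdN_lie_stdN_eq_zero hab hcd hbc hda, map_zero]
  replace hcomm := congr_arg (fun x : strictUpper n K => x.val p d) hcomm
  simp only [AddMemClass.coe_add, Matrix.add_apply, stdN_lie_apply, lie_stdN_apply] at hcomm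
  simpa [hpa, hdb, (D (stdN hab)).prop d d le_rfl] using hcomm

lemma derivation_stdN_apply_eq_zero_of_left {a b c d q : Fin n} (hab : a < b) (hcd : c < d)
    (hbc : b ≠ c) (hda : d ≠ a) (hca : c ≠ a) (hqb : q ≠ b) :
    (D (stdN hab)).val d q = 0 := by
  have hcomm : ⁅(stdN hcd : strictUpper n K), D (stdN hab)⁆ + ⁅D (stdN hcd), stdN hab⁆ =
      0 := by
    rw [← D.apply_lie_eq_add, stdN_lie_stdN_eq_zero hcd hab hda hbc, map_zero]
  replace hcomm := congr_arg (fun x : strictUpper n K => x.val c q) hcomm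
  simp only [AddMemClass.coe_add, Matrix.add_apply, stdN_lie_apply, lie_stdN_apply] at hcomm
  simpa [hca, hqb, (D (stdN hab)).prop c c le_rfl] using hcomm

/-- Both `E_{xz} = ⁅E_{xy}, E_{yz}⁆` and `⁅E_{yz}, E_{xz}⁆ = 0` express `(D E_{xz}) w y` through
`(D E_{yz}) w x`, with opposite signs. -/
lemma derivation_stdN_apply_eq_zero_of_lt [NeZero (2 : K)] {w x y z : Fin n} (hxy : x < y)
    (hyz : y < z) (hwx : w ≠ x) (hwy : w ≠ y) : (D (stdN hyz)).val w x = 0 := by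
  have hcomm : ⁅(stdN hyz : strictUpper n K), D (stdN (hxy.trans hyz))⁆
      + ⁅D (stdN hyz), stdN (hxy.trans hyz)⁆ = 0 := by
    rw [← D.apply_lie_eq_add, stdN_lie_stdN_eq_zero hyz _ (hxy.trans hyz).ne' hyz.ne',
      map_zero]
  have hsplit := D.apply_lie_eq_add (stdN hxy) (stdN hyz)
  rw [stdN_lie_stdN] at hsplit
  replace hcomm := congr_arg (fun u : strictUpper n K => u.val w z) hcomm
  replace hsplit := congr_arg (fun u : strictUpper n K => u.val w y) hsplit
  simp only [AddMemClass.coe_add, Matrix.add_apply, stdN_lie_apply, lie_stdN_apply] at hcomm hsplit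
  simp [hwx, hwy, hyz.ne] at hcomm hsplit
  have htwice : (2 : K) * (D (stdN hyz)).val w x = 0 := by
    linear_combination hcomm + hsplit
  exact (mul_eq_zero.mp htwice).resolve_left two_ne_zero

/-- Both `E_{wy} = ⁅E_{wx}, E_{xy}⁆` and `⁅E_{wx}, E_{wy}⁆ = 0` express `(D E_{wy}) x z` through
`(D E_{wx}) y z`, with opposite signs. -/
lemma derivation_stdN_apply_eq_zero_of_gt [NeZero (2 : K)] {w x y z : Fin n} (hwx : w < x)
    (hxy : x < y) (hzx : z ≠ x) (hzy : z ≠ y) : (D (stdN hwx)).val y z = 0 := by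
  have hcomm : ⁅(stdN hwx : strictUpper n K), D (stdN (hwx.trans hxy))⁆
      + ⁅D (stdN hwx), stdN (hwx.trans hxy)⁆ = 0 := by
    rw [← D.apply_lie_eq_add, stdN_lie_stdN_eq_zero hwx _ hwx.ne' (hwx.trans hxy).ne',
      map_zero]
  have hsplit := D.apply_lie_eq_add (stdN hwx) (stdN hxy)
  rw [stdN_lie_stdN] at hsplit
  replace hcomm := congr_arg (fun u : strictUpper n K => u.val w z) hcomm
  replace hsplit := congr_arg (fun u : strictUpper n K => u.val x z) hsplit
  simp only [AddMemClass.coe_add, Matrix.add_apply, stdN_lie_apply, lie_stdN_apply] at hcomm hsplit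
  simp [hzx, hzy, hwx.ne'] at hcomm hsplit
  have htwice : (2 : K) * (D (stdN hwx)).val y z = 0 := by
    linear_combination hsplit - hcomm
  exact (mul_eq_zero.mp htwice).resolve_left two_ne_zero

lemma derivation_stdN_superdiag_apply_eq_zero [NeZero (2 : K)] (hn : 4 ≤ n) {a b p q : Fin n}
    (hab : a < b) (hb : (b : ℕ) = a + 1) (hq : (q : ℕ) = p + 1) (hpa : p ≠ a) :
    (D (stdN hab)).val p q = 0 := by
  rcases (by omega : (a : ℕ) + 2 ≤ p ∨ (p : ℕ) + 2 ≤ a ∨ (a : ℕ) = p + 1 ∨ (p : ℕ) = a + 1)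
    with hfar | hfar | hadj | hadj
  · exact derivation_stdN_apply_eq_zero_of_gt D (y := p) hab (by omega) (by omega) (by omega)
  · exact derivation_stdN_apply_eq_zero_of_lt D (w := p) (x := q) (by omega) hab (by omega) hpa
  · by_cases hp : (p : ℕ) = 0
    · obtain ⟨d, hd⟩ : ∃ d : Fin n, (d : ℕ) = q + 2 := ⟨⟨q + 2, by omega⟩, rfl⟩
      exact derivation_stdN_apply_eq_zero_of_right D (d := d) hab (by omega) (by omega)
        (by omega) (by omega) hpa
    · obtain ⟨c, hc⟩ : ∃ c : Fin n, (c : ℕ) = p - 1 := ⟨⟨p - 1, by omega⟩, rfl⟩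
      exact derivation_stdN_apply_eq_zero_of_left D (c := c) hab (by omega) (by omega)
        (by omega) (by omega) (by omega)
  · by_cases hp : (p : ℕ) + 2 < n
    · obtain ⟨d, hd⟩ : ∃ d : Fin n, (d : ℕ) = q + 1 := ⟨⟨q + 1, by omega⟩, rfl⟩
      exact derivation_stdN_apply_eq_zero_of_right D (d := d) hab (by omega) (by omega)
        (by omega) (by omega) hpa
    · obtain ⟨c, hc⟩ : ∃ c : Fin n, (c : ℕ) = p - 2 := ⟨⟨p - 2, by omega⟩, rfl⟩
      exact derivation_stdN_apply_eq_zero_of_left D (c := c) hab (by omega) (by omega)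
        (by omega) (by omega) (by omega)

lemma derivation_stdN_mem_filtration_two [NeZero (2 : K)] (hn : 4 ≤ n)
    (hdiag : ∀ (a b : Fin n) (hab : a < b), (b : ℕ) = a + 1 → (D (stdN hab)).val a b = 0)
    {a b : Fin n} (hab : a < b) (hb : (b : ℕ) = a + 1) : D (stdN hab) ∈ filtration 2 := by
  intro p q hqp
  rcases (by omega : q ≤ p ∨ (q : ℕ) = p + 1) with hle | hq
  · exact (D (stdN hab)).prop p q hle
  · by_cases hpa : p = a
    · obtain rfl := hpa
      obtain rfl : q = b := by omega
      exact hdiag p q hab hb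
    · exact derivation_stdN_superdiag_apply_eq_zero D hn hab hb hq hpa

lemma derivation_stdN_mem_filtration
    (hsuperdiag : ∀ (a b : Fin n) (hab : a < b), (b : ℕ) = a + 1 →
      D (stdN hab) ∈ filtration 2)
    (a b : Fin n) (hab : a < b) : D (stdN hab) ∈ filtration ((b : ℕ) - a + 1) := by
  suffices h : ∀ (k : ℕ) (a b : Fin n) (hab : a < b), (b : ℕ) = a + k + 1 →
      D (stdN hab) ∈ filtration (k + 2) by
    convert h ((b : ℕ) - a - 1) a b hab (by omega) using 2
    omega
  intro k
  induction k with
  | zero => exact hsuperdiag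
  | succ k ih =>
    intro a b hab hb
    obtain ⟨c, hc⟩ : ∃ c : Fin n, (c : ℕ) = b - 1 := ⟨⟨b - 1, by omega⟩, rfl⟩
    have hac : a < c := by omega
    have hcb : c < b := by omega
    have hleft : ⁅stdN hac, D (stdN hcb)⁆ ∈ filtration (k + 1 + 2) :=
      lie_mem_filtration (stdN_mem_filtration hac (by omega)) (hsuperdiag c b hcb (by omega))
    have hright : ⁅D (stdN hac), stdN hcb⁆ ∈ filtration (k + 2 + 1) :=
      lie_mem_filtration (ih a c hac (by omega)) (mem_filtration_one _)
    rw [← stdN_lie_stdN hac hcb, D.apply_lie_eq_add]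
    exact add_mem hleft hright

lemma isNilpotent_derivation_of_superdiag_eq_zero [NeZero (2 : K)] (hn : 4 ≤ n)
    (hdiag : ∀ (a b : Fin n) (hab : a < b), (b : ℕ) = a + 1 → (D (stdN hab)).val a b = 0) :
    IsNilpotent (D.toLinearMap : Module.End K (strictUpper n K)) :=
  isNilpotent_of_map_mem_filtration_succ _ fun _ _ =>
    map_mem_filtration_succ D.toLinearMap <| derivation_stdN_mem_filtration D fun _ _ hab hb =>
      derivation_stdN_mem_filtration_two D hn hdiag hab hb

end strictUpper

theorem nilindependent_derivations_dim_le
    (K : Type*) [Field K] [CharZero K] (n : ℕ) (hn : 4 ≤ n)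
    (V : Submodule K (LieDerivation K (strictUpper n K) (strictUpper n K)))
    (hV : ∀ D ∈ V, D ≠ 0 →
      ¬IsNilpotent (LieDerivation.toLinearMap D : Module.End K (strictUpper n K))) :
    Module.finrank K V ≤ n - 1 := by
  obtain ⟨m, rfl⟩ : ∃ m, n = m + 1 := ⟨n - 1, by omega⟩
  let superdiag : LieDerivation K (strictUpper (m + 1) K) (strictUpper (m + 1) K) →ₗ[K]
      Fin m → K :=
    { toFun D i := (D (stdN (Fin.castSucc_lt_succ (i := i)))).val i.castSucc i.succ
      map_add' _ _ := rfl
      map_smul' _ _ := rfl }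
  have hdisj : Disjoint V (LinearMap.ker superdiag) := by
    refine Submodule.disjoint_def.mpr fun D hDV hD => by_contra fun hD0 => hV D hDV hD0 ?_
    refine strictUpper.isNilpotent_derivation_of_superdiag_eq_zero D hn fun a b hab hb => ?_
    obtain ⟨i, rfl, rfl⟩ : ∃ i : Fin m, i.castSucc = a ∧ i.succ = b :=
      ⟨⟨a, by omega⟩, rfl, Fin.ext hb.symm⟩
    exact congr_fun (LinearMap.mem_ker.mp hD) i
  calc Module.finrank K V ≤ Module.finrank K (Fin m → K) :=
        LinearMap.finrank_le_finrank_of_injective (LinearMap.injective_domRestrict_iff.mpr hdisj)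
    _ = m + 1 - 1 := by simp
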